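/- Let z : [0,∞) → ℝ be differentiable on intervals where z ≠ 0 and satisfy z = -μβ·|z|^{β-1}·ż with μ > 0, β > 1 (equivalently ż = -(1/(μβ))|z|^{2-β}sign(z)). If z(0) = z₀ > 0, then z(t) > 0 and z is strictly decreasing on [0, T) with T = (μβ/(β-1))·z₀^{β-1}, and z(t) → 0 as t → T. -/

import Mathlib

open Filter

/-- Reduced-order sliding dynamics z = -μβ|z|^{β-1}ż: z stays positive, strictly decreases
on [0,T) with T = (μβ/(β-1)) z₀^{β-1}, and z → 0 as t → T. -/
theorem stmt11 (μ β z₀ : ℝ) (hμ : 0 < μ) (hβ : 1 < β) (hz₀ : 0 < z₀)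
    (T : ℝ) (hT : T = (μ * β / (β - 1)) * z₀ ^ (β - 1))
    (z z' : ℝ → ℝ) (hcont : Continuous z) (hz0 : z 0 = z₀)
    (hode : ∀ t ∈ Set.Ico (0 : ℝ) T, z t ≠ 0 →
      HasDerivAt z (z' t) t ∧ z t = -(μ * β) * |z t| ^ (β - 1) * z' t) :
    (∀ t ∈ Set.Ico (0 : ℝ) T, 0 < z t) ∧
    StrictAntiOn z (Set.Ico (0 : ℝ) T) ∧
    Tendsto z (nhdsWithin T (Set.Iio T)) (nhds 0) := by
  have hβ1 : (0:ℝ) < β - 1 := by linarith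
  have hμβ : (0:ℝ) < μ * β := mul_pos hμ (by linarith)
  set c : ℝ := (β - 1) / (μ * β) with hc_def
  have hc : 0 < c := div_pos hβ1 hμβ
  have hcT : c * T = z₀ ^ (β - 1) := by
    rw [hT, hc_def]; field_simp
  have hT0 : 0 < T := by
    rw [hT]; exact mul_pos (div_pos hμβ hβ1) (Real.rpow_pos_of_pos hz₀ _)
  -- derivative of the first integral is zero
  have hderiv0 : ∀ x ∈ Set.Ico (0:ℝ) T, 0 < z x →
      HasDerivAt (fun s => z s ^ (β-1) + c * s) 0 x := by
    intro x hx hxpos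
    obtain ⟨hdz, heq⟩ := hode x hx hxpos.ne'
    rw [abs_of_pos hxpos] at heq
    have hsplit : z x ^ (β-1) = z x ^ (β-1-1) * z x := by
      have h := Real.rpow_add hxpos (β-1-1) 1
      rw [Real.rpow_one] at h
      rw [show (β-1-1)+1 = β-1 by ring] at h
      exact h
    have hpow : HasDerivAt (fun s => z s ^ (β-1)) (z' x * (β-1) * z x ^ (β-1-1)) x :=
      hdz.rpow_const (Or.inl hxpos.ne')
    have hlin : HasDerivAt (fun s : ℝ => c * s) c x := by
      simpa using (hasDerivAt_id x).const_mul c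
    have hsum := hpow.add hlin
    convert hsum using 1
    case e'_4 => rfl
    case e'_5 => rfl
    case e'_8 => rfl
    have h1 : (μ * β * (z x ^ (β-1-1)) * z' x) * z x = (-1) * z x := by
      rw [hsplit] at heq; linear_combination heq
    have hkey : μ * β * (z x ^ (β-1-1)) * z' x = -1 := mul_right_cancel₀ hxpos.ne' h1
    rw [hc_def]
    field_simp
    linear_combination (1 - β) * hkey
  -- the first integral is constant as long as z stays positive
  have hB : ∀ u, 0 ≤ u → u < T → (∀ s ∈ Set.Ico (0:ℝ) u, 0 < z s) →
      z u ^ (β-1) + c * u = z₀ ^ (β-1) := by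
    intro u hu0 huT hposIco
    have hcontF : ContinuousOn (fun s => z s ^ (β-1) + c*s) (Set.Icc 0 u) := by
      apply ContinuousOn.add
      · exact hcont.continuousOn.rpow_const (fun s _ => Or.inr hβ1.le)
      · exact (continuous_const.mul continuous_id).continuousOn
    have hd : ∀ x ∈ Set.Ico (0:ℝ) u,
        HasDerivWithinAt (fun s => z s ^ (β-1) + c*s) 0 (Set.Ici x) x := by
      intro x hx
      exact (hderiv0 x ⟨hx.1, hx.2.trans huT⟩ (hposIco x hx)).hasDerivWithinAt
    have := constant_of_has_deriv_right_zero hcontF hd u (Set.right_mem_Icc.2 hu0)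
    simpa [hz0] using this
  -- positivity
  have hpos : ∀ t ∈ Set.Ico (0:ℝ) T, ∀ s ∈ Set.Icc (0:ℝ) t, 0 < z s := by
    intro t ht s hs
    by_contra hle
    push_neg at hle
    set K : Set ℝ := Set.Icc 0 t ∩ {x | z x ≤ 0} with hK_def
    have hKne : K.Nonempty := ⟨s, hs, hle⟩
    have hKcl : IsClosed K := isClosed_Icc.inter (isClosed_le hcont continuous_const)
    have hKbdd : BddBelow K := ⟨0, fun x hx => hx.1.1⟩
    set u := sInf K with hu_def
    have huK : u ∈ K := hKcl.csInf_mem hKne hKbdd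
    have hu0 : 0 ≤ u := huK.1.1
    have hut : u ≤ t := huK.1.2
    have huT : u < T := lt_of_le_of_lt hut ht.2
    have hune : u ≠ 0 := by
      intro h
      have : z 0 ≤ 0 := by rw [h] at huK; exact huK.2
      rw [hz0] at this; linarith
    have hupos : 0 < u := lt_of_le_of_ne hu0 (Ne.symm hune)
    have posIco : ∀ x ∈ Set.Ico (0:ℝ) u, 0 < z x := by
      intro x hx
      by_contra hxle
      push_neg at hxle
      have hxK : x ∈ K := ⟨⟨hx.1, hx.2.le.trans hut⟩, hxle⟩
      exact absurd (csInf_le hKbdd hxK) (not_le.2 hx.2)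
    have hzu0 : z u = 0 := by
      have h1 : Set.Ico 0 u ∈ nhdsWithin u (Set.Iio u) :=
        Ico_mem_nhdsLT_of_mem ⟨hupos, le_refl u⟩
      have h2 : Tendsto z (nhdsWithin u (Set.Iio u)) (nhds (z u)) :=
        (hcont.tendsto u).mono_left nhdsWithin_le_nhds
      have h3 : 0 ≤ z u :=
        ge_of_tendsto h2 (eventually_of_mem h1 (fun x hx => (posIco x hx).le))
      have h4 : z u ≤ 0 := huK.2
      exact le_antisymm h4 h3
    have := hB u hu0 huT posIco
    rw [hzu0, Real.zero_rpow hβ1.ne', zero_add] at this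
    have : u = T := mul_left_cancel₀ hc.ne' (by rw [this, hcT])
    linarith
  have hposT : ∀ t ∈ Set.Ico (0:ℝ) T, 0 < z t :=
    fun t ht => hpos t ht t ⟨ht.1, le_refl t⟩
  refine ⟨hposT, ?_, ?_⟩
  · apply strictAntiOn_of_deriv_neg (convex_Ico 0 T) hcont.continuousOn
    intro x hx
    rw [interior_Ico] at hx
    have hx' : x ∈ Set.Ico (0:ℝ) T := ⟨hx.1.le, hx.2⟩
    have hp := hposT x hx'
    obtain ⟨hdz, heq⟩ := hode x hx' hp.ne'
    rw [hdz.deriv]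
    rw [abs_of_pos hp] at heq
    have hA : 0 < z x ^ (β-1) := Real.rpow_pos_of_pos hp _
    nlinarith [mul_pos hμβ hA]
  · have hId : ∀ t ∈ Set.Ico (0:ℝ) T, z t = (z₀ ^ (β-1) - c * t) ^ (1/(β-1)) := by
      intro t ht
      have hp := hposT t ht
      have h := hB t ht.1 ht.2 (fun x hx => hpos t ht x ⟨hx.1, hx.2.le⟩)
      have heq : z₀ ^ (β-1) - c*t = z t ^ (β-1) := by linarith
      rw [heq, ← Real.rpow_mul hp.le, mul_one_div, div_self hβ1.ne', Real.rpow_one]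
    have hg : Tendsto (fun t => z₀ ^ (β-1) - c*t) (nhdsWithin T (Set.Iio T)) (nhds 0) := by
      have h1 : Tendsto (fun t : ℝ => z₀ ^ (β-1) - c*t) (nhds T)
          (nhds (z₀ ^ (β-1) - c*T)) :=
        tendsto_const_nhds.sub (tendsto_id.const_mul c)
      rw [hcT, sub_self] at h1
      exact h1.mono_left nhdsWithin_le_nhds
    have hrp : Tendsto (fun y : ℝ => y ^ (1/(β-1))) (nhds 0) (nhds 0) := by
      have h := (Real.continuousAt_rpow_const 0 (1/(β-1))
        (Or.inr (by positivity))).tendsto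
      have hz : (0:ℝ) ^ ((β-1)⁻¹) = 0 := Real.zero_rpow (inv_ne_zero hβ1.ne')
      simpa [one_div, hz] using h
    refine Tendsto.congr' ?_ (hrp.comp hg)
    filter_upwards [Ico_mem_nhdsLT_of_mem ⟨hT0, le_refl T⟩] with t ht
    exact (hId t ht).symm
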